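/- Let E : ℝⁿ → ℝ be twice continuously differentiable with gradient g, let U ⊆ ℝⁿ be an open corridor for E, let h > 0, β ∈ (0,1), and θ₀ ∈ U. Consider the heavy-ball momentum iterates v₀ = 0, v_t = β v_{t-1} - h • g(θ_{t-1}), θ_t = θ_{t-1} + v_t, and assume all iterates and the segments between consecutive iterates remain in U. Then every momentum iterate lies on the line of steepest descent through θ₀: for each t there exists s_t ≥ 0 with θ_t = θ₀ - s_t • g(θ₀), namely s_t = (h/(1-β)) ∑_{i=1}^{t} (1 - β^i); consequently momentum follows the same straight-line trajectory as the gradient flow through θ₀, traveled at a different speed. -/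

import Mathlib

/-- An open set `U ⊆ ℝⁿ` is a *corridor* for `E` if every solution of the gradient flow
`θ'(t) = -∇E(θ(t))` whose image lies in `U` is a straight line traveled at constant speed,
i.e. satisfies `θ(t) = θ(a) + (t - a) • v` for some fixed vector `v`. -/
def IsCorridor {n : ℕ} (E : EuclideanSpace ℝ (Fin n) → ℝ)
    (U : Set (EuclideanSpace ℝ (Fin n))) : Prop :=
  ∀ (a b : ℝ), a ≤ b → ∀ θ : ℝ → EuclideanSpace ℝ (Fin n),
    (∀ t ∈ Set.Icc a b, HasDerivAt θ (-(gradient E (θ t))) t) →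
    (∀ t ∈ Set.Icc a b, θ t ∈ U) →
    ∃ v : EuclideanSpace ℝ (Fin n), ∀ t ∈ Set.Icc a b, θ t = θ a + (t - a) • v

/-! Near a point `p` of the corridor the gradient flow through `p` exists (Picard–Lindelöf) and
stays in `U` for a short time, so it is a straight line; comparing its constant velocity with
`-∇E` along it shows that `∇E` is constant near `p` on the line of steepest descent through `p`.
A continuity argument spreads this over every initial segment of the line through `θ₀` lying in
`U`. Along such a segment momentum only ever sees the gradient `g(θ₀)`, so its velocities are
`-c_t • g(θ₀)` with `c_{t+1} = β c_t + h`, and the segment it travels next extends the part of the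
line known to lie in `U`. -/

open Set Filter Topology

theorem ContDiff.gradient {F : Type*} [NormedAddCommGroup F] [InnerProductSpace ℝ F]
    [CompleteSpace F] {f : F → ℝ} {k m : WithTop ℕ∞} (hf : ContDiff ℝ k f) (hmk : m + 1 ≤ k) :
    ContDiff ℝ m (gradient f) :=
  (InnerProductSpace.toDual ℝ F).symm.contDiff.comp (hf.fderiv_right hmk)

section Corridor

variable {n : ℕ} {E : EuclideanSpace ℝ (Fin n) → ℝ} {U : Set (EuclideanSpace ℝ (Fin n))}

theorem IsCorridor.eventually_gradient_sub_smul_eq (hcor : IsCorridor E U) (hU : IsOpen U)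
    (hE : ContDiff ℝ 1 (gradient E)) {p : EuclideanSpace ℝ (Fin n)} (hp : p ∈ U) :
    ∀ᶠ t in 𝓝 (0 : ℝ), gradient E (p - t • gradient E p) = gradient E p := by
  obtain ⟨f, hf0, ε, hε, hf⟩ :=
    hE.neg.contDiffAt.exists_forall_mem_closedBall_exists_eq_forall_mem_Ioo_hasDerivAt₀ (x₀ := p) 0
  have hflow : ∀ᶠ t in 𝓝 (0 : ℝ), HasDerivAt f (-gradient E (f t)) t :=
    eventually_of_mem (Ioo_mem_nhds (by linarith) (by linarith)) hf
  have hfU : ∀ᶠ t in 𝓝 (0 : ℝ), f t ∈ U :=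
    hflow.self_of_nhds.continuousAt.preimage_mem_nhds (hf0 ▸ hU.mem_nhds hp)
  obtain ⟨a, b, hab, hab_nhds, hab_sub⟩ := exists_Icc_mem_subset_of_mem_nhds (hflow.and hfU)
  obtain ⟨w, hw⟩ := hcor a b (hab.1.trans hab.2) f (fun t ht ↦ (hab_sub ht).1)
    (fun t ht ↦ (hab_sub ht).2)
  have haff : ∀ᶠ t in 𝓝 (0 : ℝ), f t = p + t • w := by
    filter_upwards [hab_nhds] with t ht
    have hp' : p = f a + (0 - a) • w := hf0 ▸ hw 0 hab
    rw [hw t ht, hp']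
    module
  have hderiv : ∀ᶠ t in 𝓝 (0 : ℝ), HasDerivAt f w t := by
    filter_upwards [haff.eventually_nhds] with t ht
    exact (by simpa using ((hasDerivAt_id t).smul_const w).const_add p :
      HasDerivAt (fun s : ℝ ↦ p + s • w) w t).congr_of_eventuallyEq ht
  have hw_eq : w = -gradient E p := hf0 ▸ hderiv.self_of_nhds.unique hflow.self_of_nhds
  filter_upwards [haff, hderiv, hflow] with t hft hft' hflowt
  have := hft'.unique hflowt
  rw [hft, hw_eq, smul_neg, ← sub_eq_add_neg] at this
  exact (neg_injective this).symm

theorem IsCorridor.gradient_sub_smul_eq (hcor : IsCorridor E U) (hU : IsOpen U)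
    (hE : ContDiff ℝ 1 (gradient E)) (θ₀ : EuclideanSpace ℝ (Fin n)) {S : ℝ} (hS : 0 ≤ S)
    (hray : ∀ s ∈ Icc 0 S, θ₀ - s • gradient E θ₀ ∈ U) :
    gradient E (θ₀ - S • gradient E θ₀) = gradient E θ₀ := by
  set g₀ := gradient E θ₀
  have hcont : Continuous fun s : ℝ ↦ gradient E (θ₀ - s • g₀) :=
    hE.continuous.comp (by fun_prop)
  suffices Icc 0 S ⊆ {s | gradient E (θ₀ - s • g₀) = g₀} from this ⟨hS, le_rfl⟩
  refine IsClosed.Icc_subset_of_forall_mem_nhdsWithin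
    ((isClosed_eq hcont continuous_const).inter isClosed_Icc) (by simp [g₀]) ?_
  rintro s ⟨hs, hsS⟩
  have hloc := hcor.eventually_gradient_sub_smul_eq hU hE (hray s (Ico_subset_Icc_self hsS))
  rw [hs] at hloc
  refine nhdsWithin_le_nhds <|
    (((continuous_sub_right s).tendsto' s 0 (sub_self s)).eventually hloc).mono fun r hr ↦ ?_
  simpa only [sub_sub, ← add_smul, add_sub_cancel] using hr

end Corridor

def momentumSpeed (h β : ℝ) (t : ℕ) : ℝ := h * ∑ i ∈ Finset.range t, β ^ i

def momentumDistance (h β : ℝ) (t : ℕ) : ℝ := ∑ i ∈ Finset.Icc 1 t, momentumSpeed h β i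

section Momentum

variable {h β : ℝ}

theorem momentumSpeed_succ (t : ℕ) :
    momentumSpeed h β (t + 1) = β * momentumSpeed h β t + h := by
  simp only [momentumSpeed, geom_sum_succ]
  ring

theorem momentumSpeed_nonneg (hh : 0 ≤ h) (hβ : 0 ≤ β) (t : ℕ) : 0 ≤ momentumSpeed h β t :=
  mul_nonneg hh (Finset.sum_nonneg fun i _ ↦ pow_nonneg hβ i)

theorem momentumSpeed_succ_pos (hh : 0 < h) (hβ : 0 ≤ β) (t : ℕ) :
    0 < momentumSpeed h β (t + 1) := by
  rw [momentumSpeed_succ]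
  have := momentumSpeed_nonneg hh.le hβ t
  positivity

theorem momentumDistance_succ (t : ℕ) :
    momentumDistance h β (t + 1) = momentumDistance h β t + momentumSpeed h β (t + 1) :=
  Finset.sum_Icc_succ_top (Nat.le_add_left 1 t) _

theorem momentumDistance_nonneg (hh : 0 ≤ h) (hβ : 0 ≤ β) (t : ℕ) : 0 ≤ momentumDistance h β t :=
  Finset.sum_nonneg fun i _ ↦ momentumSpeed_nonneg hh hβ i

theorem momentumDistance_eq (hβ : β ≠ 1) (t : ℕ) :
    momentumDistance h β t = h / (1 - β) * ∑ i ∈ Finset.Icc 1 t, (1 - β ^ i) := by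
  have : 1 - β ≠ 0 := sub_ne_zero.mpr hβ.symm
  rw [momentumDistance, Finset.mul_sum]
  refine Finset.sum_congr rfl fun i _ ↦ ?_
  rw [momentumSpeed, geom_sum_eq hβ]
  field_simp
  ring

variable {V : Type*} [AddCommGroup V] [Module ℝ V]

theorem sub_smul_mem_of_forall_segment_mem {U : Set V} {x g : V} {a b : ℝ} (hab : a < b)
    (hseg : ∀ r ∈ Icc (0 : ℝ) 1, (x - a • g) + r • ((x - b • g) - (x - a • g)) ∈ U)
    {s : ℝ} (hs : s ∈ Icc a b) : x - s • g ∈ U := by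
  have hba : 0 < b - a := sub_pos.mpr hab
  convert hseg ((s - a) / (b - a)) ⟨div_nonneg (by linarith [hs.1]) hba.le,
    (div_le_one hba).mpr (by linarith [hs.2])⟩ using 1
  rw [sub_sub_sub_cancel_left, ← sub_smul, smul_smul,
    show (s - a) / (b - a) * (a - b) = a - s by field_simp; ring]
  module

theorem momentum_iterate_eq_sub_smul (G : V → V) (U : Set V) (hh : 0 < h) (hβ : 0 ≤ β)
    (θ₀ : V) (v θs : ℕ → V) (hv0 : v 0 = 0) (hθs0 : θs 0 = θ₀)
    (hv : ∀ t : ℕ, v (t + 1) = β • v t - h • G (θs t))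
    (hθs : ∀ t : ℕ, θs (t + 1) = θs t + v (t + 1))
    (hseg : ∀ t : ℕ, ∀ s ∈ Icc (0 : ℝ) 1, θs t + s • (θs (t + 1) - θs t) ∈ U)
    (hG : ∀ S : ℝ, 0 ≤ S → (∀ s ∈ Icc 0 S, θ₀ - s • G θ₀ ∈ U) → G (θ₀ - S • G θ₀) = G θ₀) :
    ∀ t : ℕ, θs t = θ₀ - momentumDistance h β t • G θ₀ := by
  set g₀ := G θ₀
  suffices ∀ t, θs t = θ₀ - momentumDistance h β t • g₀ ∧ v t = -momentumSpeed h β t • g₀ ∧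
      ∀ s ∈ Icc 0 (momentumDistance h β t), θ₀ - s • g₀ ∈ U from fun t ↦ (this t).1
  intro t
  induction t with
  | zero =>
    have h0 : θ₀ ∈ U := by simpa [hθs0] using hseg 0 0 (by simp)
    simp [momentumDistance, momentumSpeed, hθs0, hv0, h0]
  | succ t ih =>
    obtain ⟨hθt, hvt, hrayt⟩ := ih
    have hGt : G (θs t) = g₀ := by
      rw [hθt]
      exact hG _ (momentumDistance_nonneg hh.le hβ t) hrayt
    have hvt' : v (t + 1) = -momentumSpeed h β (t + 1) • g₀ := by
      rw [hv, hvt, hGt, momentumSpeed_succ]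
      module
    have hθt' : θs (t + 1) = θ₀ - momentumDistance h β (t + 1) • g₀ := by
      rw [hθs, hθt, hvt', momentumDistance_succ]
      module
    refine ⟨hθt', hvt', fun s hs ↦ ?_⟩
    rcases le_or_gt s (momentumDistance h β t) with hst | hst
    · exact hrayt s ⟨hs.1, hst⟩
    · have hseg_t := hseg t
      rw [hθt, hθt'] at hseg_t
      refine sub_smul_mem_of_forall_segment_mem ?_ hseg_t ⟨hst.le, hs.2⟩
      rw [momentumDistance_succ]
      linarith [momentumSpeed_succ_pos hh hβ t]

end Momentum

theorem momentum_on_steepest_descent_line {n : ℕ}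
    (E : EuclideanSpace ℝ (Fin n) → ℝ) (hE : ContDiff ℝ 2 E)
    (U : Set (EuclideanSpace ℝ (Fin n))) (hU : IsOpen U) (hcor : IsCorridor E U)
    (h β : ℝ) (hh : 0 < h) (hβ : β ∈ Set.Ioo (0 : ℝ) 1)
    (θ₀ : EuclideanSpace ℝ (Fin n))
    (v θs : ℕ → EuclideanSpace ℝ (Fin n))
    (hv0 : v 0 = 0) (hθs0 : θs 0 = θ₀)
    (hv : ∀ t : ℕ, v (t + 1) = β • v t - h • gradient E (θs t))
    (hθs : ∀ t : ℕ, θs (t + 1) = θs t + v (t + 1))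
    (hseg : ∀ t : ℕ, ∀ s ∈ Set.Icc (0 : ℝ) 1, θs t + s • (θs (t + 1) - θs t) ∈ U) :
    ∀ t : ℕ, ∃ s : ℝ, 0 ≤ s ∧
      s = h / (1 - β) * ∑ i ∈ Finset.Icc 1 t, (1 - β ^ i) ∧
      θs t = θ₀ - s • gradient E θ₀ := by
  intro t
  refine ⟨momentumDistance h β t, momentumDistance_nonneg hh.le hβ.1.le t,
    momentumDistance_eq hβ.2.ne t, ?_⟩
  exact momentum_iterate_eq_sub_smul (gradient E) U hh hβ.1.le θ₀ v θs hv0 hθs0 hv hθs hseg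
    (fun S hS hray ↦ hcor.gradient_sub_smul_eq hU (hE.gradient le_rfl) θ₀ hS hray) t
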